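/- arXiv:1109.5150 — 3 statements merged into one kernel-verified Lean document; each statement's English description precedes it below -/
import Mathlib

section
/- Let f, g : ℝ → ℝ be smooth (infinitely differentiable) functions. Assume that f(0) = 0, that g attains a global maximum at t = 0 (i.e. g(t) ≤ g(0) for all t ∈ ℝ), and that for all t ∈ ℝ one has (f'(t))² ≤ (f(t))² + g''(t). Then f and g are both constant functions; in particular f(t) = 0 and g(t) = g(0) for all t ∈ ℝ. -/
private lemma aux_one_side (f g : ℝ → ℝ)
    (hf : ContDiff ℝ (⊤ : ℕ∞) f) (hg : ContDiff ℝ (⊤ : ℕ∞) g)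
    (hf0 : f 0 = 0)
    (hmax : ∀ t : ℝ, g t ≤ g 0)
    (hineq : ∀ t : ℝ, (deriv f t) ^ 2 ≤ (f t) ^ 2 + deriv (deriv g) t) :
    ∀ t : ℝ, 0 ≤ t → f t = 0 ∧ g t = g 0 := by
  have hfd : Differentiable ℝ f := hf.differentiable (by simp)
  have hgd : Differentiable ℝ g := hg.differentiable (by simp)
  have hg' : ContDiff ℝ (((⊤:ℕ∞)) : WithTop ℕ∞) (deriv g) :=
    (contDiff_infty_iff_deriv.1 (hg.of_le (by simp))).2
  have hg'd : Differentiable ℝ (deriv g) := hg'.differentiable (by simp)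
  have hg0 : deriv g 0 = 0 :=
    IsLocalMax.deriv_eq_zero (Filter.Eventually.of_forall hmax)
  set v : ℝ → ℝ := fun t => (f t) ^ 2 - deriv g t - 2 * (g t - g 0) with hv
  have hvd : ∀ t, HasDerivAt v
      (2 * f t * deriv f t - deriv (deriv g) t - 2 * deriv g t) t := by
    intro t
    have h1 : HasDerivAt (fun t => (f t) ^ 2) (2 * f t * deriv f t) t := by
      have := ((hfd t).hasDerivAt).fun_pow 2
      simpa [mul_comm, mul_assoc, mul_left_comm] using this
    have h2 : HasDerivAt (deriv g) (deriv (deriv g) t) t := (hg'd t).hasDerivAt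
    have h3 : HasDerivAt (fun t => 2 * (g t - g 0)) (2 * deriv g t) t :=
      (((hgd t).hasDerivAt).sub_const (g 0)).const_mul 2
    exact (h1.sub h2).sub h3
  have hvderiv : ∀ t, deriv v t = 2 * f t * deriv f t - deriv (deriv g) t - 2 * deriv g t :=
    fun t => (hvd t).deriv
  have hkey : ∀ t, deriv v t ≤ 2 * v t := by
    intro t
    rw [hvderiv t]
    have h1 := hineq t
    have h2 := hmax t
    simp only [hv]
    nlinarith [sq_nonneg (deriv f t - f t)]
  -- Gronwall: exp(-2t) * v t is antitone on [0, ∞)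
  set h : ℝ → ℝ := fun t => Real.exp (-2 * t) * v t with hh
  have hvdiff : Differentiable ℝ v := fun t => (hvd t).differentiableAt
  have hhd : ∀ t, HasDerivAt h (Real.exp (-2 * t) * (deriv v t - 2 * v t)) t := by
    intro t
    have e1 : HasDerivAt (fun t : ℝ => Real.exp (-2 * t)) (-2 * Real.exp (-2 * t)) t := by
      have := ((hasDerivAt_id t).const_mul (-2 : ℝ)).exp
      simpa [mul_comm] using this
    have := e1.fun_mul (hvd t)
    rw [← hvderiv t] at *
    convert this using 1
    all_goals first | rfl | ring
  have hanti : AntitoneOn h (Set.Ici (0:ℝ)) := by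
    apply antitoneOn_of_deriv_nonpos (convex_Ici 0)
    · exact (Differentiable.continuous (by
        exact (Real.differentiable_exp.comp (differentiable_id.const_mul _)).mul hvdiff
          )).continuousOn
    · intro x _
      exact ((hhd x).differentiableAt).differentiableWithinAt
    · intro x _
      rw [(hhd x).deriv]
      have := hkey x
      have := Real.exp_pos (-2 * x)
      nlinarith
  have hv0 : v 0 = 0 := by simp [hv, hf0, hg0]
  have hvle : ∀ t, 0 ≤ t → v t ≤ 0 := by
    intro t ht
    have := hanti (Set.self_mem_Ici) (Set.mem_Ici.2 ht) ht
    have hpos := Real.exp_pos (-2 * t)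
    simp only [hh, hv0, mul_zero] at this
    nlinarith
  have hg'nonneg : ∀ t, 0 ≤ t → 0 ≤ deriv g t := by
    intro t ht
    have h1 := hvle t ht
    have h2 := hmax t
    simp only [hv] at h1
    nlinarith [sq_nonneg (f t)]
  have hmono : MonotoneOn g (Set.Ici (0:ℝ)) := by
    apply monotoneOn_of_deriv_nonneg (convex_Ici 0) hgd.continuous.continuousOn
      hgd.differentiableOn
    intro x hx
    exact hg'nonneg x (le_of_lt (by simpa using hx))
  have hgconst : ∀ t, 0 ≤ t → g t = g 0 := by
    intro t ht
    exact le_antisymm (hmax t) (hmono Set.self_mem_Ici (Set.mem_Ici.2 ht) ht)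
  intro t ht
  refine ⟨?_, hgconst t ht⟩
  rcases eq_or_lt_of_le ht with h0 | h0
  · rw [← h0]; exact hf0
  · have hder : deriv g t = 0 := by
      have : g =ᶠ[nhds t] fun _ => g 0 := by
        filter_upwards [Ioi_mem_nhds h0] with x hx
        exact hgconst x (le_of_lt hx)
      rw [this.deriv_eq, deriv_const]
    have h1 := hvle t ht
    have h2 := hgconst t ht
    have : f t ^ 2 ≤ 0 := by simp only [hv] at h1; rw [hder, h2] at h1; linarith
    exact pow_eq_zero_iff (by norm_num) |>.1 (le_antisymm this (sq_nonneg _))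

/-- Lemma 3.1 (Bogdanov): if `f`, `g` are smooth, `f 0 = 0`, `g` has a global
maximum at `0`, and `(f')² ≤ f² + g''` everywhere, then `f` and `g` are constant;
in particular `f ≡ 0` and `g ≡ g 0`. -/
theorem stmt_0 (f g : ℝ → ℝ)
    (hf : ContDiff ℝ (⊤ : ℕ∞) f) (hg : ContDiff ℝ (⊤ : ℕ∞) g)
    (hf0 : f 0 = 0)
    (hmax : ∀ t : ℝ, g t ≤ g 0)
    (hineq : ∀ t : ℝ, (deriv f t) ^ 2 ≤ (f t) ^ 2 + deriv (deriv g) t) :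
    (∀ t : ℝ, f t = 0) ∧ (∀ t : ℝ, g t = g 0) := by
  have pos := aux_one_side f g hf hg hf0 hmax hineq
  set F : ℝ → ℝ := fun t => f (-t) with hF
  set G : ℝ → ℝ := fun t => g (-t) with hG
  have hFc : ContDiff ℝ (⊤ : ℕ∞) F := hf.comp contDiff_neg
  have hGc : ContDiff ℝ (⊤ : ℕ∞) G := hg.comp contDiff_neg
  have hG' : ∀ t, deriv G t = -deriv g (-t) := fun t => deriv_comp_neg g t
  have hG'' : ∀ t, deriv (deriv G) t = deriv (deriv g) (-t) := by
    intro t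
    have : deriv G = fun t => -deriv g (-t) := funext hG'
    rw [this]
    have : deriv (fun t : ℝ => -deriv g (-t)) t = -deriv (fun t : ℝ => deriv g (-t)) t :=
      deriv.neg
    rw [this, deriv_comp_neg (deriv g) t]
    ring
  have hF' : ∀ t, deriv F t = -deriv f (-t) := fun t => deriv_comp_neg f t
  have neg := aux_one_side F G hFc hGc (by simp [hF, hf0])
    (fun t => by simpa [hG] using hmax (-t))
    (by intro t; rw [hF', hG'']; simpa [neg_sq] using hineq (-t))
  constructor
  · intro t
    rcases le_or_gt 0 t with ht | ht
    · exact (pos t ht).1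
    · have := (neg (-t) (by linarith)).1
      simpa [hF] using this
  · intro t
    rcases le_or_gt 0 t with ht | ht
    · exact (pos t ht).2
    · have := (neg (-t) (by linarith)).2
      simpa [hG] using this
end

section
/- Let f, g : ℝ → ℝ be smooth functions. Assume that f(0) = 0, that g(0) = 0 is a global maximum of g (i.e. g(t) ≤ 0 for all t ∈ ℝ), and that (f'(t))² ≤ (f(t))² + g''(t) for all t ∈ ℝ. Then f(t) = 0 and g(t) = 0 for all t ∈ [0, 1). -/
/-- Local conclusion in the proof of Lemma 3.1: if `f`, `g` are smooth,
`f 0 = 0`, `g 0 = 0` is a global maximum of `g`, and `(f')² ≤ f² + g''`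
everywhere, then `f ≡ 0` and `g ≡ 0` on `[0, 1)`. -/

theorem stmt_4 (f g : ℝ → ℝ)
    (hf : ContDiff ℝ (⊤ : ℕ∞) f) (hg : ContDiff ℝ (⊤ : ℕ∞) g)
    (hf0 : f 0 = 0) (hg0 : g 0 = 0)
    (hmax : ∀ t : ℝ, g t ≤ 0)
    (hineq : ∀ t : ℝ, (deriv f t) ^ 2 ≤ (f t) ^ 2 + deriv (deriv g) t) :
    ∀ t ∈ Set.Ico (0 : ℝ) 1, f t = 0 ∧ g t = 0 := by
  have hfd : Differentiable ℝ f := hf.differentiable (by simp)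
  have hgd : Differentiable ℝ g := hg.differentiable (by simp)
  have hg'd : Differentiable ℝ (deriv g) :=
    ((contDiff_infty_iff_deriv.mp (hg.of_le (by simp))).2).differentiable (by simp)
  -- deriv g 0 = 0
  have hg'0 : deriv g 0 = 0 := by
    have : IsLocalMax g 0 := Filter.Eventually.of_forall (fun x => by rw [hg0]; exact hmax x)
    exact this.deriv_eq_zero
  -- h = ∫ f²
  set F : ℝ → ℝ := fun s => (f s) ^ 2 with hF
  have hFc : Continuous F := (hfd.continuous).pow 2
  set h : ℝ → ℝ := fun t => ∫ s in (0:ℝ)..t, F s with hh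
  have hhd : ∀ t, HasDerivAt h (F t) t := fun t =>
    intervalIntegral.integral_hasDerivAt_right (hFc.intervalIntegrable _ _)
      (hFc.stronglyMeasurableAtFilter _ _) hFc.continuousAt
  have hh0 : h 0 = 0 := intervalIntegral.integral_same
  have hhnonneg : ∀ t, 0 ≤ t → 0 ≤ h t := fun t ht =>
    intervalIntegral.integral_nonneg ht (fun s _ => sq_nonneg _)
  -- φ = g' - f² + 2h is monotone and φ 0 = 0
  set φ : ℝ → ℝ := fun t => deriv g t - (f t) ^ 2 + 2 * h t with hφ
  have hφd : ∀ t, HasDerivAt φ (deriv (deriv g) t - 2 * f t * deriv f t + 2 * F t) t := by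
    intro t
    have h1 : HasDerivAt (fun t => deriv g t) (deriv (deriv g) t) t := (hg'd t).hasDerivAt
    have h2 : HasDerivAt (fun t => (f t) ^ 2) (2 * f t * deriv f t) t := by
      have := ((hfd t).hasDerivAt).fun_pow 2
      simpa [mul_comm, mul_assoc, mul_left_comm] using this
    have h3 := ((hhd t).const_mul 2)
    simpa using (h1.fun_sub h2).fun_add h3
  have hφmono : Monotone φ := by
    apply monotone_of_deriv_nonneg (fun t => (hφd t).differentiableAt)
    intro t
    rw [(hφd t).deriv]
    show 0 ≤ deriv (deriv g) t - 2 * f t * deriv f t + 2 * (f t) ^ 2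
    nlinarith [hineq t, sq_nonneg (deriv f t - f t)]
  have hφ0 : φ 0 = 0 := by simp [hφ, hg'0, hf0, hh0]
  have hφnonneg : ∀ t, 0 ≤ t → 0 ≤ φ t := fun t ht => hφ0 ▸ hφmono ht
  -- G = ∫ e^{-2s} g s
  set E : ℝ → ℝ := fun s => Real.exp (-2 * s) * g s with hE
  have hEc : Continuous E := (Real.continuous_exp.comp (by continuity)).mul hgd.continuous
  set G : ℝ → ℝ := fun t => ∫ s in (0:ℝ)..t, E s with hG
  have hGd : ∀ t, HasDerivAt G (E t) t := fun t =>
    intervalIntegral.integral_hasDerivAt_right (hEc.intervalIntegrable _ _)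
      (hEc.stronglyMeasurableAtFilter _ _) hEc.continuousAt
  have hGnonpos : ∀ t, 0 ≤ t → G t ≤ 0 := by
    intro t ht
    have h1 : 0 ≤ ∫ s in (0:ℝ)..t, -E s :=
      intervalIntegral.integral_nonneg ht (fun s _ => by
        simp only [hE, neg_nonneg]
        exact mul_nonpos_of_nonneg_of_nonpos (Real.exp_nonneg _) (hmax s))
    rw [intervalIntegral.integral_neg] at h1
    simpa [hG] using h1
  -- χ
  set χ : ℝ → ℝ := fun t => Real.exp (-2 * t) * (g t - h t) + 2 * G t with hχ
  have hexp : ∀ t : ℝ, HasDerivAt (fun t => Real.exp (-2 * t)) (-2 * Real.exp (-2 * t)) t := by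
    intro t
    have h0 : HasDerivAt (fun t : ℝ => -2 * t) (-2) t := by
      simpa using (hasDerivAt_id t).const_mul (-2)
    simpa [mul_comm] using h0.exp
  have hχd : ∀ t, HasDerivAt χ (Real.exp (-2 * t) * φ t) t := by
    intro t
    have h1 : HasDerivAt (fun t => g t - h t) (deriv g t - F t) t :=
      ((hgd t).hasDerivAt.congr_deriv rfl).sub (hhd t)
    have h2 := (hexp t).fun_mul h1
    have h3 := (hGd t).const_mul 2
    have h4 := h2.fun_add h3
    convert h4 using 1 <;> try rfl
    simp only [hφ, hE, hF]
    ring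
  have hχmono : MonotoneOn χ (Set.Ici (0:ℝ)) := by
    apply monotoneOn_of_deriv_nonneg (convex_Ici 0)
    · exact fun t _ => (hχd t).differentiableAt.continuousAt.continuousWithinAt
    · exact fun t _ => ((hχd t).differentiableAt).differentiableWithinAt
    · intro t ht
      rw [interior_Ici] at ht
      rw [(hχd t).deriv]
      exact mul_nonneg (Real.exp_nonneg _) (hφnonneg t (le_of_lt ht))
  have hχ0 : χ 0 = 0 := by simp [hχ, hg0, hh0, hG]
  -- main: g t = 0 and h t = 0 for t ≥ 0
  have key : ∀ t : ℝ, 0 ≤ t → g t = 0 ∧ h t = 0 := by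
    intro t ht
    have h1 : 0 ≤ χ t := hχ0 ▸ hχmono (Set.self_mem_Ici) ht ht
    have h2 : 2 * G t ≤ 0 := by linarith [hGnonpos t ht]
    have h3 : g t - h t ≤ 0 := by linarith [hmax t, hhnonneg t ht]
    have h4 : Real.exp (-2 * t) * (g t - h t) ≤ 0 :=
      mul_nonpos_of_nonneg_of_nonpos (Real.exp_nonneg _) h3
    have h5 : Real.exp (-2 * t) * (g t - h t) = 0 := by
      simp only [hχ] at h1; linarith
    have h6 : g t - h t = 0 := by
      rcases mul_eq_zero.mp h5 with h | h
      · exact absurd h (Real.exp_ne_zero _)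
      · exact h
    constructor <;> linarith [hmax t, hhnonneg t ht]
  intro t ht
  obtain ⟨ht0, ht1⟩ := ht
  refine ⟨?_, (key t ht0).1⟩
  rcases eq_or_lt_of_le ht0 with rfl | htpos
  · exact hf0
  · -- h = 0 on a neighborhood of t, so deriv h t = 0 = f t ^ 2
    have hev : h =ᶠ[nhds t] (fun _ => 0) := by
      filter_upwards [Ioi_mem_nhds htpos] with s hs
      exact (key s (le_of_lt hs)).2
    have : deriv h t = 0 := by rw [hev.deriv_eq]; simp
    have hft : (f t) ^ 2 = 0 := ((hhd t).deriv).symm.trans this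
    exact pow_eq_zero_iff (n := 2) (by norm_num) |>.mp hft
end

section
/- Let f, g : ℝ → ℝ be real-analytic functions. Assume that f(0) = 0, that g(t) ≤ g(0) for all t ∈ ℝ, and that (f'(t))² ≤ (f(t))² + g''(t) for all t ∈ ℝ. Then f and g are both constant functions. -/
/-!
If `f` did not vanish identically near `0`, then `f(t) = t ^ n h(t)` with `n ≥ 1` and `h(0) ≠ 0`,
so `f'² - f² = t ^ (2n - 2) ((n h + t h')² - t² h²)` is positive on a punctured neighbourhood
of `0`. Then `g'' > 0` just to the right of `0`, and since `g'(0) = 0` at the maximum, `g` would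
increase there. Hence `f` vanishes near `0`, and everywhere by the identity theorem. Now
`g'' ≥ 0`, so `g` is convex, and a convex function on `ℝ` with a global maximum is constant.
-/

open Set Filter Topology

theorem ConvexOn.eq_of_isMaxOn_univ {E : Type*} [AddCommGroup E] [Module ℝ E] {g : E → ℝ} {a : E}
    (hg : ConvexOn ℝ univ g) (ha : IsMaxOn g univ a) (x : E) : g x = g a := by
  have hmid : g a ≤ (1 / 2 : ℝ) • g x + (1 / 2 : ℝ) • g ((2 : ℝ) • a - x) := by
    have hsum : (1 / 2 : ℝ) • x + (1 / 2 : ℝ) • ((2 : ℝ) • a - x) = a := by module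
    have hhalf : (0 : ℝ) ≤ 1 / 2 := by norm_num
    simpa only [hsum] using hg.2 (mem_univ x) (mem_univ ((2 : ℝ) • a - x)) hhalf hhalf
      (by norm_num)
  have hx : g x ≤ g a := ha (mem_univ x)
  have hx' : g ((2 : ℝ) • a - x) ≤ g a := ha (mem_univ _)
  simp only [smul_eq_mul] at hmid
  linarith

theorem lt_of_deriv_eq_zero_of_deriv_deriv_pos {g : ℝ → ℝ} {a b : ℝ} (hab : a < b)
    (hc : ContinuousOn g (Icc a b)) (hd : DifferentiableAt ℝ g a) (h0 : deriv g a = 0)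
    (hpos : ∀ x ∈ Ioo a b, 0 < deriv (deriv g) x) : g a < g b := by
  have hconv : StrictConvexOn ℝ (Icc a b) g :=
    strictConvexOn_of_deriv2_pos (convex_Icc a b) hc (by rwa [interior_Icc])
  have hslope := hconv.deriv_lt_slope (left_mem_Icc.2 hab.le) (right_mem_Icc.2 hab.le) hab hd
  rw [h0, slope_def_field, div_pos_iff_of_pos_right (sub_pos.2 hab)] at hslope
  linarith

theorem IsLocalMax.frequently_deriv_deriv_nonpos {g : ℝ → ℝ} {a : ℝ} (hmax : IsLocalMax g a)
    (hd : DifferentiableAt ℝ g a) (hc : ∀ᶠ x in 𝓝 a, ContinuousAt g x) :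
    ∃ᶠ x in 𝓝[>] a, deriv (deriv g) x ≤ 0 := by
  intro hpos
  simp only [not_le] at hpos
  obtain ⟨u, hau : a < u, hu⟩ := mem_nhdsGT_iff_exists_Ioo_subset.1
    (hpos.and (nhdsWithin_le_nhds (hmax.and hc)))
  obtain ⟨b, hab, hbu⟩ := exists_between hau
  replace hbu : Ioc a b ⊆ Ioo a u := Ioc_subset_Ioo_right hbu
  have hcont : ContinuousOn g (Icc a b) := by
    refine fun x hx => ContinuousAt.continuousWithinAt ?_
    rcases eq_or_lt_of_le hx.1 with rfl | hax
    · exact hd.continuousAt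
    · exact (hu (hbu ⟨hax, hx.2⟩)).2.2
  have hlt := lt_of_deriv_eq_zero_of_deriv_deriv_pos hab hcont hd hmax.deriv_eq_zero
    fun x hx => (hu (hbu (Ioo_subset_Ioc_self hx))).1
  exact absurd (hu (hbu (right_mem_Ioc.2 hab))).2.1 (not_le.2 hlt)

theorem eventually_sq_lt_deriv_sq_of_eventuallyEq_pow_mul {f h : ℝ → ℝ} {a : ℝ} {n : ℕ}
    (hn : n ≠ 0) (hh : AnalyticAt ℝ h a) (ha : h a ≠ 0)
    (hf : ∀ᶠ t in 𝓝 a, f t = (t - a) ^ n * h t) :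
    ∀ᶠ t in 𝓝[≠] a, f t ^ 2 < deriv f t ^ 2 := by
  obtain ⟨m, rfl⟩ : ∃ m, n = m + 1 := ⟨n - 1, by omega⟩
  set k : ℝ → ℝ := fun t => (m + 1) * h t + (t - a) * deriv h t
  have hderiv : ∀ᶠ t in 𝓝 a, deriv f t = (t - a) ^ m * k t := by
    have hfd : deriv f =ᶠ[𝓝 a] deriv fun t => (t - a) ^ (m + 1) * h t :=
      EventuallyEq.deriv hf
    filter_upwards [hfd, hh.eventually_analyticAt] with t ht hht
    rw [ht, (((hasDerivAt_id' t).sub_const a).fun_pow (m + 1) |>.fun_mul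
      hht.differentiableAt.hasDerivAt).deriv]
    simp only [k, Nat.add_sub_cancel]
    push_cast
    ring
  have hk : ∀ᶠ t in 𝓝 a, ((t - a) * h t) ^ 2 < k t ^ 2 := by
    have hcont : ContinuousAt (fun t => k t ^ 2 - ((t - a) * h t) ^ 2) a := by
      have hh_cont := hh.continuousAt
      have hh'_cont := hh.deriv.continuousAt
      fun_prop
    have hpos : 0 < k a ^ 2 - ((a - a) * h a) ^ 2 := by
      have hka : k a = (m + 1) * h a := by simp [k]
      rw [hka, sub_self, zero_mul, zero_pow two_ne_zero, sub_zero]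
      exact pow_two_pos_of_ne_zero (mul_ne_zero (by positivity) ha)
    filter_upwards [hcont.eventually (lt_mem_nhds hpos)] with t ht
    linarith
  filter_upwards [nhdsWithin_le_nhds (hf.and (hderiv.and hk)), self_mem_nhdsWithin]
    with t ⟨hft, hf't, hkt⟩ hta
  have hpow : 0 < ((t - a) ^ m) ^ 2 := by
    have : t - a ≠ 0 := sub_ne_zero.2 hta
    positivity
  calc f t ^ 2 = ((t - a) ^ m) ^ 2 * ((t - a) * h t) ^ 2 := by rw [hft]; ring
    _ < ((t - a) ^ m) ^ 2 * k t ^ 2 := mul_lt_mul_of_pos_left hkt hpow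
    _ = deriv f t ^ 2 := by rw [hf't]; ring

theorem AnalyticAt.eventually_sq_lt_deriv_sq {f : ℝ → ℝ} {a : ℝ} (hf : AnalyticAt ℝ f a)
    (hfa : f a = 0) (hne : ¬∀ᶠ t in 𝓝 a, f t = 0) :
    ∀ᶠ t in 𝓝[≠] a, f t ^ 2 < deriv f t ^ 2 := by
  obtain ⟨n, h, hh, ha, hfh⟩ := hf.exists_eventuallyEq_pow_smul_nonzero_iff.2 hne
  have hn : n ≠ 0 := by
    rintro rfl
    simp [hfh.self_of_nhds, ha] at hfa
  exact eventually_sq_lt_deriv_sq_of_eventuallyEq_pow_mul hn hh ha hfh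

/-- Real-analytic case of Lemma 3.1: if `f`, `g` are real-analytic on `ℝ`,
`f 0 = 0`, `g` has a global maximum at `0`, and `(f')² ≤ f² + g''` everywhere,
then `f` and `g` are constant. -/
theorem stmt_6 (f g : ℝ → ℝ)
    (hf : ∀ t : ℝ, AnalyticAt ℝ f t) (hg : ∀ t : ℝ, AnalyticAt ℝ g t)
    (hf0 : f 0 = 0)
    (hmax : ∀ t : ℝ, g t ≤ g 0)
    (hineq : ∀ t : ℝ, (deriv f t) ^ 2 ≤ (f t) ^ 2 + deriv (deriv g) t) :
    (∃ c : ℝ, ∀ t : ℝ, f t = c) ∧ (∃ c : ℝ, ∀ t : ℝ, g t = c) := by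
  have hf_near : ∀ᶠ t in 𝓝 0, f t = 0 := by
    by_contra hne
    have hgmax : IsLocalMax g 0 := Eventually.of_forall hmax
    have hg'' := hgmax.frequently_deriv_deriv_nonpos
      (hg 0).differentiableAt (Eventually.of_forall fun t => (hg t).continuousAt)
    have hf' := ((hf 0).eventually_sq_lt_deriv_sq hf0 hne).filter_mono
      (nhdsWithin_mono _ fun t ht => ne_of_gt ht)
    obtain ⟨t, hg''t, hf't⟩ := (hg''.and_eventually hf').exists
    linarith [hineq t]
  have hf_zero : ∀ t, f t = 0 := fun t =>
    (AnalyticOnNhd.eqOn_zero_of_preconnected_of_eventuallyEq_zero (fun x _ => hf x)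
      isPreconnected_univ (mem_univ 0) hf_near) (mem_univ t)
  have hg''_nonneg : ∀ t, 0 ≤ deriv (deriv g) t := fun t => by
    simpa [show f = 0 from funext hf_zero] using hineq t
  have hconv : ConvexOn ℝ univ g :=
    convexOn_univ_of_deriv2_nonneg (fun t => (hg t).differentiableAt)
      (fun t => (hg t).deriv.differentiableAt) hg''_nonneg
  exact ⟨⟨0, hf_zero⟩, ⟨g 0, hconv.eq_of_isMaxOn_univ fun t _ => hmax t⟩⟩
end
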